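/- arXiv:1203.1535 — 10 statements merged into one kernel-verified Lean document; each statement's English description precedes it below -/
import Mathlib

section
/- Let κ > 0. The quadratic equation 2μP_xΔ_0Δ_L·ω² + (8ακΔ_0Δ_Q/√(2π))·ω − (2μ²P_xP_vΔ_0 + 4α²κ²Δ_Q + κ²Δ'_0G) = 0 has a unique positive real root ω, and for this root ω one has the identity (2(L−Q)Δ_0/Δ_Q)·ω² + QμP_v/Δ_Q + κ²Δ'_0G/(μ²P_x²Δ_Q) = μP_vL/Δ_L + β_1κ² − β_2·κ·√(κ² + β_3). (This is the closed-form steady-state mean square deviation of l_0-LMS, Theorem 1.) -/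
/-!
The positive root `ω` of `a ω² + b ω - c` (with `a, c > 0`) is the larger one, so
`2 a ω + b = √(b² + 4 a c)`. For the l₀-LMS coefficients the discriminant factors as
`8 Δ₀ β₀ (κ² + β₃)`, which turns `β₂ κ √(κ² + β₃)` into a multiple of `2 a ω + b`. Eliminating
`ω²` with the quadratic equation, both sides of the MSD identity become the same affine
function of `ω`.
-/

open Real

theorem quadratic_root_eq_sqrt_discrim {a b c x : ℝ} (ha : 0 < a) (hc : 0 < c) (hx : 0 < x)
    (h : a * x ^ 2 + b * x - c = 0) : 2 * a * x + b = √(b ^ 2 + 4 * a * c) := by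
  have hsq : (2 * a * x + b) ^ 2 = b ^ 2 + 4 * a * c := by linear_combination 4 * a * h
  have hprod : x * (a * x + b) = c := by linear_combination h
  have hlin : 0 < a * x + b := pos_of_mul_pos_right (hprod ▸ hc) hx.le
  rw [← hsq, sqrt_sq (by nlinarith)]

theorem existsUnique_pos_root_quadratic {a b c : ℝ} (ha : 0 < a) (hc : 0 < c) :
    ∃! x : ℝ, 0 < x ∧ a * x ^ 2 + b * x - c = 0 := by
  set r := √(b ^ 2 + 4 * a * c)
  have hr2 : r ^ 2 = b ^ 2 + 4 * a * c := sq_sqrt (by positivity)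
  have hbr : b < r := calc
    b ≤ |b| := le_abs_self b
    _ = √(b ^ 2) := (sqrt_sq_eq_abs b).symm
    _ < r := sqrt_lt_sqrt (sq_nonneg b) (by nlinarith)
  refine ⟨(r - b) / (2 * a), ⟨by positivity, ?_⟩, fun y ⟨hy, hq⟩ => ?_⟩
  · field_simp
    linear_combination hr2
  · have hroot := quadratic_root_eq_sqrt_discrim ha hc hy hq
    rw [eq_div_iff (by positivity)]
    linarith

theorem sqrt_div_pi_mul_sqrt {x : ℝ} (hx : 0 ≤ x) (y : ℝ) :
    √(x / π) * √y = √(8 * x * y) / (2 * √(2 * π)) := by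
  have h8π : √(8 * π) = 2 * √(2 * π) := by
    rw [show (8 : ℝ) * π = 2 ^ 2 * (2 * π) by ring, sqrt_mul (by positivity), sqrt_sq zero_le_two]
  rw [← sqrt_mul (div_nonneg hx pi_pos.le), ← h8π, ← sqrt_div' _ (by positivity)]
  congr 1
  field_simp

section l0LMS

variable {L Q μ Px Pv α G κ ΔL ΔQ Δ0 Δ0' β0 β1 β2 β3 : ℝ}

theorem l0LMS_discrim_eq (hβ0ne : β0 ≠ 0)
    (hβ0 : β0 = μ * Px * Δ0' * ΔL * G + 4 * α ^ 2 * ΔQ * (μ * Px * ΔL + Δ0 * ΔQ / π))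
    (hβ3 : β3 = 2 * μ ^ 3 * Px ^ 2 * Pv * Δ0 * ΔL / β0) :
    (8 * α * κ * Δ0 * ΔQ / √(2 * π)) ^ 2
        + 4 * (2 * μ * Px * Δ0 * ΔL) * (2 * μ ^ 2 * Px * Pv * Δ0 + 4 * α ^ 2 * κ ^ 2 * ΔQ
          + κ ^ 2 * Δ0' * G)
      = 8 * Δ0 * β0 * (κ ^ 2 + β3) := by
  have hs2 : √(2 * π) ^ 2 = 2 * π := sq_sqrt (by positivity)
  rw [hβ3, div_pow, hs2]
  field_simp
  rw [hβ0]
  field_simp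
  ring

theorem l0LMS_msd_eq (hμ : 0 < μ) (hPx : 0 < Px) (hΔLpos : 0 < ΔL) (hΔQpos : 0 < ΔQ)
    (hΔ0β0 : 0 ≤ Δ0 * β0)
    (hΔL : ΔL = 2 - (L + 2) * μ * Px) (hΔQ : ΔQ = 2 - (Q + 2) * μ * Px)
    (hΔ0 : Δ0 = 1 - μ * Px)
    (hβ1 : β1 = (Δ0' * G + 4 * (L - Q) * α ^ 2 * (μ * Px + 2 * Δ0 * ΔQ / (π * ΔL)))
        / (μ ^ 2 * Px ^ 2 * ΔL))
    (hβ2 : β2 = (4 * α * (L - Q) / (μ ^ 2 * Px ^ 2 * ΔL ^ 2)) * √(Δ0 * β0 / π))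
    {ω : ℝ}
    (hq : 2 * μ * Px * Δ0 * ΔL * ω ^ 2 + (8 * α * κ * Δ0 * ΔQ / √(2 * π)) * ω
        - (2 * μ ^ 2 * Px * Pv * Δ0 + 4 * α ^ 2 * κ ^ 2 * ΔQ + κ ^ 2 * Δ0' * G) = 0)
    (hroot : 2 * (2 * μ * Px * Δ0 * ΔL) * ω + 8 * α * κ * Δ0 * ΔQ / √(2 * π)
        = √(8 * Δ0 * β0 * (κ ^ 2 + β3))) :
    (2 * (L - Q) * Δ0 / ΔQ) * ω ^ 2 + Q * μ * Pv / ΔQ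
        + κ ^ 2 * Δ0' * G / (μ ^ 2 * Px ^ 2 * ΔQ)
      = μ * Pv * L / ΔL + β1 * κ ^ 2 - β2 * κ * √(κ ^ 2 + β3) := by
  set s := √(2 * π) with hs_def
  have hs : 0 < s := sqrt_pos.mpr (by positivity)
  have hπ : π = s ^ 2 / 2 := by rw [sq_sqrt (by positivity)]; ring
  have hβ2term : β2 * κ * √(κ ^ 2 + β3) = 2 * α * κ * (L - Q) / (μ ^ 2 * Px ^ 2 * ΔL ^ 2 * s)
      * (2 * (2 * μ * Px * Δ0 * ΔL) * ω + 8 * α * κ * Δ0 * ΔQ / s) := calc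
    _ = 4 * α * (L - Q) / (μ ^ 2 * Px ^ 2 * ΔL ^ 2) * κ * (√(Δ0 * β0 / π) * √(κ ^ 2 + β3)) := by
      rw [hβ2]; ring
    _ = _ := by
      rw [sqrt_div_pi_mul_sqrt hΔ0β0, ← mul_assoc 8, ← hs_def, hroot]
      field_simp
      ring
  have hq' : 2 * μ * Px * Δ0 * ΔL * ω ^ 2 * s + 8 * α * κ * Δ0 * ΔQ * ω
      - (2 * μ ^ 2 * Px * Pv * Δ0 + 4 * α ^ 2 * κ ^ 2 * ΔQ + κ ^ 2 * Δ0' * G) * s = 0 := by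
    field_simp at hq
    linear_combination hq
  rw [hβ2term, hβ1, hπ]
  field_simp
  linear_combination ((L - Q) * μ * Px * ΔL * s) * hq'
    + (Q * μ ^ 3 * Pv * Px ^ 2 * ΔL * s ^ 2 + κ ^ 2 * Δ0' * G * ΔL * s ^ 2) * hΔL
    - (L * μ ^ 3 * Pv * Px ^ 2 * ΔL * s ^ 2 + κ ^ 2 * Δ0' * G * ΔL * s ^ 2) * hΔQ
    + (2 * (L - Q) * μ ^ 3 * Pv * Px ^ 2 * ΔL * s ^ 2) * hΔ0

end l0LMS

theorem l0LMS_steady_state_MSD_general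
    (L Q μ Px Pv α G κ : ℝ)
    (hL : 1 ≤ L) (hQL : Q ≤ L)
    (hμ : 0 < μ) (hPx : 0 < Px) (hPv : 0 < Pv) (hα : 0 < α) (hG : 0 ≤ G)
    (hstab : (L + 2) * μ * Px < 2)
    (ΔL ΔQ Δ0 Δ0' β0 β1 β2 β3 : ℝ)
    (hΔL : ΔL = 2 - (L + 2) * μ * Px)
    (hΔQ : ΔQ = 2 - (Q + 2) * μ * Px)
    (hΔ0 : Δ0 = 1 - μ * Px)
    (hΔ0' : Δ0' = 2 - μ * Px)
    (hβ0 : β0 = μ * Px * Δ0' * ΔL * G + 4 * α ^ 2 * ΔQ * (μ * Px * ΔL + Δ0 * ΔQ / Real.pi))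
    (hβ1 : β1 = (Δ0' * G + 4 * (L - Q) * α ^ 2 * (μ * Px + 2 * Δ0 * ΔQ / (Real.pi * ΔL)))
        / (μ ^ 2 * Px ^ 2 * ΔL))
    (hβ2 : β2 = (4 * α * (L - Q) / (μ ^ 2 * Px ^ 2 * ΔL ^ 2)) * Real.sqrt (Δ0 * β0 / Real.pi))
    (hβ3 : β3 = 2 * μ ^ 3 * Px ^ 2 * Pv * Δ0 * ΔL / β0) :
    (∃! ω : ℝ, 0 < ω ∧
      2 * μ * Px * Δ0 * ΔL * ω ^ 2 + (8 * α * κ * Δ0 * ΔQ / Real.sqrt (2 * Real.pi)) * ω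
        - (2 * μ ^ 2 * Px * Pv * Δ0 + 4 * α ^ 2 * κ ^ 2 * ΔQ + κ ^ 2 * Δ0' * G) = 0) ∧
    (∀ ω : ℝ, 0 < ω →
      2 * μ * Px * Δ0 * ΔL * ω ^ 2 + (8 * α * κ * Δ0 * ΔQ / Real.sqrt (2 * Real.pi)) * ω
        - (2 * μ ^ 2 * Px * Pv * Δ0 + 4 * α ^ 2 * κ ^ 2 * ΔQ + κ ^ 2 * Δ0' * G) = 0 →
      (2 * (L - Q) * Δ0 / ΔQ) * ω ^ 2 + Q * μ * Pv / ΔQ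
          + κ ^ 2 * Δ0' * G / (μ ^ 2 * Px ^ 2 * ΔQ)
        = μ * Pv * L / ΔL + β1 * κ ^ 2 - β2 * κ * Real.sqrt (κ ^ 2 + β3)) := by
  have hμPx : 0 < μ * Px := mul_pos hμ hPx
  have hΔLpos : 0 < ΔL := by rw [hΔL]; linarith
  have hΔQpos : 0 < ΔQ := by rw [hΔQ]; nlinarith
  have hΔ0pos : 0 < Δ0 := by rw [hΔ0]; nlinarith
  have hΔ0'pos : 0 < Δ0' := by rw [hΔ0']; linarith
  have hβ0pos : 0 < β0 := by rw [hβ0]; positivity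
  have ha : 0 < 2 * μ * Px * Δ0 * ΔL := by positivity
  have hc : 0 < 2 * μ ^ 2 * Px * Pv * Δ0 + 4 * α ^ 2 * κ ^ 2 * ΔQ + κ ^ 2 * Δ0' * G := by
    positivity
  refine ⟨existsUnique_pos_root_quadratic ha hc, fun ω hω hq => ?_⟩
  have hroot := quadratic_root_eq_sqrt_discrim ha hc hω hq
  rw [l0LMS_discrim_eq hβ0pos.ne' hβ0 hβ3] at hroot
  exact l0LMS_msd_eq hμ hPx hΔLpos hΔQpos (by positivity) hΔL hΔQ hΔ0 hβ1 hβ2 hq hroot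

/-- Theorem 1 of "Performance Analysis of $l_0$ Norm Constraint Least Mean Square
Algorithm": the quadratic equation defining the steady-state zero-tap variance ω has a
unique positive root, and the steady-state MSD expressed via ω equals the closed form
`μ P_v L / Δ_L + β₁ κ² − β₂ κ √(κ² + β₃)`. -/
theorem l0LMS_steady_state_MSD
    (L Q μ Px Pv α G κ : ℝ)
    (hL : 1 ≤ L) (hQ0 : 0 ≤ Q) (hQL : Q ≤ L)
    (hμ : 0 < μ) (hPx : 0 < Px) (hPv : 0 < Pv) (hα : 0 < α) (hG : 0 ≤ G)
    (hstab : (L + 2) * μ * Px < 2) (hκ : 0 < κ)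
    (ΔL ΔQ Δ0 Δ0' β0 β1 β2 β3 : ℝ)
    (hΔL : ΔL = 2 - (L + 2) * μ * Px)
    (hΔQ : ΔQ = 2 - (Q + 2) * μ * Px)
    (hΔ0 : Δ0 = 1 - μ * Px)
    (hΔ0' : Δ0' = 2 - μ * Px)
    (hβ0 : β0 = μ * Px * Δ0' * ΔL * G + 4 * α ^ 2 * ΔQ * (μ * Px * ΔL + Δ0 * ΔQ / Real.pi))
    (hβ1 : β1 = (Δ0' * G + 4 * (L - Q) * α ^ 2 * (μ * Px + 2 * Δ0 * ΔQ / (Real.pi * ΔL)))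
        / (μ ^ 2 * Px ^ 2 * ΔL))
    (hβ2 : β2 = (4 * α * (L - Q) / (μ ^ 2 * Px ^ 2 * ΔL ^ 2)) * Real.sqrt (Δ0 * β0 / Real.pi))
    (hβ3 : β3 = 2 * μ ^ 3 * Px ^ 2 * Pv * Δ0 * ΔL / β0) :
    (∃! ω : ℝ, 0 < ω ∧
      2 * μ * Px * Δ0 * ΔL * ω ^ 2 + (8 * α * κ * Δ0 * ΔQ / Real.sqrt (2 * Real.pi)) * ω
        - (2 * μ ^ 2 * Px * Pv * Δ0 + 4 * α ^ 2 * κ ^ 2 * ΔQ + κ ^ 2 * Δ0' * G) = 0) ∧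
    (∀ ω : ℝ, 0 < ω →
      2 * μ * Px * Δ0 * ΔL * ω ^ 2 + (8 * α * κ * Δ0 * ΔQ / Real.sqrt (2 * Real.pi)) * ω
        - (2 * μ ^ 2 * Px * Pv * Δ0 + 4 * α ^ 2 * κ ^ 2 * ΔQ + κ ^ 2 * Δ0' * G) = 0 →
      (2 * (L - Q) * Δ0 / ΔQ) * ω ^ 2 + Q * μ * Pv / ΔQ
          + κ ^ 2 * Δ0' * G / (μ ^ 2 * Px ^ 2 * ΔQ)
        = μ * Pv * L / ΔL + β1 * κ ^ 2 - β2 * κ * Real.sqrt (κ ^ 2 + β3)) :=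
  l0LMS_steady_state_MSD_general L Q μ Px Pv α G κ hL hQL hμ hPx hPv hα hG hstab ΔL ΔQ Δ0 Δ0' β0 β1
    β2 β3 hΔL hΔQ hΔ0 hΔ0' hβ0 hβ1 hβ2 hβ3
end

section
/- Let 0 < β_2 < β_1 and β_3 > 0 be reals, and define F(κ) = β_1κ² − β_2κ√(κ² + β_3) for κ > 0. Then κ_opt = (√β_3/2)·[((β_1+β_2)/(β_1−β_2))^{1/4} − ((β_1−β_2)/(β_1+β_2))^{1/4}] is positive, F(κ_opt) = (β_3/2)(√(β_1² − β_2²) − β_1), and F(κ) ≥ F(κ_opt) for every κ > 0. (Corollary 1: the optimal choice of κ and the minimum steady-state MSD of l_0-LMS is μP_vL/Δ_L + (β_3/2)(√(β_1²−β_2²) − β_1).) -/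
private lemma l0LMS_min_aux (β1 β2 β3 : ℝ) (hβ2 : 0 < β2) (hβ12 : β2 < β1) (hβ3 : 0 < β3)
    (p q sp sq : ℝ) (hp_def : p = β1 + β2) (hq_def : q = β1 - β2)
    (hsp : 0 < sp) (hsq : 0 < sq)
    (hsp2 : sp * sp = p) (hsq2 : sq * sq = q)
    (κ : ℝ) (hκpos : 0 < κ) :
    β3 / 2 * (sp * sq - β1) ≤ β1 * κ ^ 2 - β2 * κ * Real.sqrt (κ ^ 2 + β3) := by
  set t := Real.sqrt (κ ^ 2 + β3) with ht_def
  have ht0 : 0 < t := Real.sqrt_pos.mpr (by positivity)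
  have ht2 : t ^ 2 = κ ^ 2 + β3 := Real.sq_sqrt (by positivity)
  clear_value t
  set s := sp * sq with hss_def
  have hs2 : s ^ 2 = β1 ^ 2 - β2 ^ 2 := by
    have h' : s ^ 2 = (sp * sp) * (sq * sq) := by rw [hss_def]; ring
    rw [h', hsp2, hsq2, hp_def, hq_def]; ring
  have hs0 : 0 < s := by rw [hss_def]; exact mul_pos hsp hsq
  clear_value s
  have hβ1 : 0 < β1 := lt_trans hβ2 hβ12
  have hslt : s < β1 := by nlinarith [hs2, hs0, mul_pos hβ2 hβ2]
  have key : (β1 * κ ^ 2 - β3 / 2 * (s - β1)) ^ 2 - (β2 * κ * t) ^ 2 =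
      (s * κ ^ 2 - β3 / 2 * (β1 - s)) ^ 2 := by
    linear_combination (-(κ ^ 4 + β3 * κ ^ 2)) * hs2 - β2 ^ 2 * κ ^ 2 * ht2
  have hx : 0 < β1 * κ ^ 2 - β3 / 2 * (s - β1) := by nlinarith
  have h2 : (β2 * κ * t) ^ 2 ≤ (β1 * κ ^ 2 - β3 / 2 * (s - β1)) ^ 2 := by
    nlinarith [key, sq_nonneg (s * κ ^ 2 - β3 / 2 * (β1 - s))]
  have h1 : β2 * κ * t ≤ β1 * κ ^ 2 - β3 / 2 * (s - β1) := by
    calc β2 * κ * t = Real.sqrt ((β2 * κ * t) ^ 2) := (Real.sqrt_sq (by positivity)).symm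
      _ ≤ Real.sqrt ((β1 * κ ^ 2 - β3 / 2 * (s - β1)) ^ 2) := Real.sqrt_le_sqrt h2
      _ = _ := Real.sqrt_sq hx.le
  linarith


/-- Corollary 1: the optimal zero-attraction strength
`κ_opt = (√β₃/2)·[((β₁+β₂)/(β₁−β₂))^{1/4} − ((β₁−β₂)/(β₁+β₂))^{1/4}]` is positive,
the excess steady-state MSD `F(κ) = β₁κ² − β₂κ√(κ² + β₃)` attains the value
`(β₃/2)(√(β₁² − β₂²) − β₁)` at `κ_opt`, and this is its minimum over `κ > 0`. -/
theorem l0LMS_optimal_kappa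
    (β1 β2 β3 : ℝ) (hβ2 : 0 < β2) (hβ12 : β2 < β1) (hβ3 : 0 < β3)
    (F : ℝ → ℝ)
    (hF : ∀ κ : ℝ, F κ = β1 * κ ^ 2 - β2 * κ * Real.sqrt (κ ^ 2 + β3))
    (κopt : ℝ)
    (hκopt : κopt = (Real.sqrt β3 / 2) *
        (((β1 + β2) / (β1 - β2)) ^ ((1 : ℝ) / 4) - ((β1 - β2) / (β1 + β2)) ^ ((1 : ℝ) / 4))) :
    0 < κopt ∧
    F κopt = (β3 / 2) * (Real.sqrt (β1 ^ 2 - β2 ^ 2) - β1) ∧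
    ∀ κ : ℝ, 0 < κ → F κopt ≤ F κ := by
  set p := β1 + β2 with hp_def
  set q := β1 - β2 with hq_def
  have hp : 0 < p := by rw [hp_def]; linarith
  have hq : 0 < q := by linarith
  have hpq : 1 < p / q := by
    rw [lt_div_iff₀ hq]; linarith
  set a := ((p / q) : ℝ) ^ ((1 : ℝ) / 4) with ha_def
  have ha1 : 1 < a := by
    rw [ha_def]
    exact Real.one_lt_rpow_iff_of_pos (by positivity) |>.mpr (Or.inl ⟨hpq, by norm_num⟩)
  have ha0 : 0 < a := by linarith
  have hb : ((q / p) : ℝ) ^ ((1 : ℝ) / 4) = a⁻¹ := by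
    rw [show q / p = (p / q)⁻¹ by rw [inv_div], ← Real.inv_rpow (by positivity)]
  -- square of a
  have ha2 : a ^ 2 = Real.sqrt p / Real.sqrt q := by
    rw [ha_def, ← Real.rpow_natCast (((p/q):ℝ) ^ ((1:ℝ)/4)) 2, ← Real.rpow_mul (by positivity)]
    norm_num
    rw [← Real.sqrt_eq_rpow, Real.sqrt_div hp.le]
  set sp := Real.sqrt p with hsp_def
  set sq := Real.sqrt q with hsq_def
  have hsp : 0 < sp := Real.sqrt_pos.mpr hp
  have hsq : 0 < sq := Real.sqrt_pos.mpr hq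
  have hsp2 : sp * sp = p := Real.mul_self_sqrt hp.le
  have hsq2 : sq * sq = q := Real.mul_self_sqrt hq.le
  have hqa : q * a ^ 2 = sp * sq := by
    rw [ha2]; field_simp; nlinarith [hsp2, hsq2]
  have hainv : a⁻¹ ^ 2 = sq / sp := by
    rw [inv_pow, ha2]; field_simp
  have hpa : p * a⁻¹ ^ 2 = sp * sq := by
    rw [hainv]; field_simp; nlinarith [hsp2, hsq2]
  set s3 := Real.sqrt β3 with hs3_def
  have hs3 : 0 < s3 := Real.sqrt_pos.mpr hβ3
  have hs3sq : s3 ^ 2 = β3 := Real.sq_sqrt hβ3.le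
  set u := a with hu_def
  set v := a⁻¹ with hv_def
  have hv0 : 0 < v := by positivity
  have huv : u * v = 1 := mul_inv_cancel₀ (ne_of_gt ha0)
  have hκ : κopt = s3 / 2 * (u - v) := by rw [hκopt, hb]
  have huv_pos : 0 < u - v := by
    have : v < 1 := by
      rw [hv_def]; exact inv_lt_one_of_one_lt₀ ha1
    linarith
  have hκ0 : 0 < κopt := by rw [hκ]; positivity
  -- sqrt (κopt^2 + β3)
  have hsum : κopt ^ 2 + β3 = (s3 / 2 * (u + v)) ^ 2 := by
    rw [hκ]; linear_combination (-(u * v)) * hs3sq - β3 * huv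
  have hsqrt : Real.sqrt (κopt ^ 2 + β3) = s3 / 2 * (u + v) := by
    rw [hsum, Real.sqrt_sq (by positivity)]
  -- value at κopt
  have hs : Real.sqrt (β1 ^ 2 - β2 ^ 2) = sp * sq := by
    rw [show β1 ^ 2 - β2 ^ 2 = p * q by rw [hp_def, hq_def]; ring, hsp_def, hsq_def,
      Real.sqrt_mul hp.le]
  have hval : F κopt = (β3 / 2) * (Real.sqrt (β1 ^ 2 - β2 ^ 2) - β1) := by
    rw [hF, hsqrt, hs, hκ]
    have hq' : (β1 - β2) * u ^ 2 = sp * sq := by rw [← hq_def]; exact hqa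
    have hp' : (β1 + β2) * v ^ 2 = sp * sq := by rw [← hp_def]; exact hpa
    linear_combination (s3 ^ 2 / 4) * hq' + (s3 ^ 2 / 4) * hp' - (β1 * s3 ^ 2 / 2) * huv +
      ((sp * sq - β1) / 2) * hs3sq
  refine ⟨hκ0, hval, ?_⟩
  -- minimality
  intro κ hκpos
  rw [hval, hF, hs]
  exact l0LMS_min_aux β1 β2 β3 hβ2 hβ12 hβ3 p q sp sq hp_def hq_def hsp hsq hsp2 hsq2 κ hκpos
end

section
/- Under the standing parameter assumptions: if Q < L, then 0 < β_2 < β_1 and (β_3/2)(√(β_1² − β_2²) − β_1) < 0, so that the minimum steady-state MSD of l_0-LMS, D^min_∞ = μP_vL/Δ_L + (β_3/2)(√(β_1² − β_2²) − β_1), is strictly smaller than the steady-state MSD of standard LMS, μP_vL/Δ_L; if Q = L, then β_2 = 0 and D^min_∞ = μP_vL/Δ_L. (Remark 2: l_0-LMS with optimal κ outperforms LMS whenever the system is not totally non-sparse.) -/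
set_option maxHeartbeats 4000000 in
private lemma l0LMS_aux_id (L Q μ Px α G ΔL ΔQ Δ0 Δ0' pp : ℝ)
    (hμ : μ ≠ 0) (hPx : Px ≠ 0) (hΔL : ΔL ≠ 0) (hpp : pp ≠ 0)
    (hΔQ : ΔQ = ΔL + (L - Q) * (μ * Px)) :
    ((Δ0' * G + 4 * (L - Q) * α ^ 2 * (μ * Px + 2 * Δ0 * ΔQ / (pp * ΔL)))
        / (μ ^ 2 * Px ^ 2 * ΔL)) ^ 2
      - (4 * α * (L - Q) / (μ ^ 2 * Px ^ 2 * ΔL ^ 2)) ^ 2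
        * (Δ0 * (μ * Px * Δ0' * ΔL * G + 4 * α ^ 2 * ΔQ * (μ * Px * ΔL + Δ0 * ΔQ / pp)) / pp)
    = ((Δ0' * G + 4 * α ^ 2 * (L - Q) * (μ * Px)) ^ 2
        + (4 * α ^ 2 * (L - Q)) * (4 * Δ0 * Δ0' * G / pp)) / (μ ^ 2 * Px ^ 2 * ΔL) ^ 2 := by
  subst hΔQ
  field_simp
  ring


set_option maxHeartbeats 2000000 in
/-- Remark 2: if `Q < L` then `0 < β₂ < β₁` and the minimum steady-state MSD of l₀-LMS,
`D^min_∞ = μP_vL/Δ_L + (β₃/2)(√(β₁² − β₂²) − β₁)`, is strictly smaller than the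
steady-state MSD `μP_vL/Δ_L` of standard LMS; if `Q = L` then `β₂ = 0` and
`D^min_∞ = μP_vL/Δ_L`. -/
theorem l0LMS_beats_LMS_iff_sparse
    (L Q μ Px Pv α G : ℝ)
    (hL : 1 ≤ L) (hQ0 : 0 ≤ Q) (hQL : Q ≤ L)
    (hμ : 0 < μ) (hPx : 0 < Px) (hPv : 0 < Pv) (hα : 0 < α) (hG : 0 ≤ G)
    (hstab : (L + 2) * μ * Px < 2)
    (ΔL ΔQ Δ0 Δ0' β0 β1 β2 β3 : ℝ)
    (hΔL : ΔL = 2 - (L + 2) * μ * Px)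
    (hΔQ : ΔQ = 2 - (Q + 2) * μ * Px)
    (hΔ0 : Δ0 = 1 - μ * Px)
    (hΔ0' : Δ0' = 2 - μ * Px)
    (hβ0 : β0 = μ * Px * Δ0' * ΔL * G + 4 * α ^ 2 * ΔQ * (μ * Px * ΔL + Δ0 * ΔQ / Real.pi))
    (hβ1 : β1 = (Δ0' * G + 4 * (L - Q) * α ^ 2 * (μ * Px + 2 * Δ0 * ΔQ / (Real.pi * ΔL)))
        / (μ ^ 2 * Px ^ 2 * ΔL))
    (hβ2 : β2 = (4 * α * (L - Q) / (μ ^ 2 * Px ^ 2 * ΔL ^ 2)) * Real.sqrt (Δ0 * β0 / Real.pi))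
    (hβ3 : β3 = 2 * μ ^ 3 * Px ^ 2 * Pv * Δ0 * ΔL / β0) :
    (Q < L →
      0 < β2 ∧ β2 < β1 ∧
      (β3 / 2) * (Real.sqrt (β1 ^ 2 - β2 ^ 2) - β1) < 0 ∧
      μ * Pv * L / ΔL + (β3 / 2) * (Real.sqrt (β1 ^ 2 - β2 ^ 2) - β1) < μ * Pv * L / ΔL) ∧
    (Q = L →
      β2 = 0 ∧
      μ * Pv * L / ΔL + (β3 / 2) * (Real.sqrt (β1 ^ 2 - β2 ^ 2) - β1) = μ * Pv * L / ΔL) := by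
  have hπ : (0:ℝ) < Real.pi := Real.pi_pos
  have hπne : Real.pi ≠ 0 := ne_of_gt hπ
  have hm : 0 < μ * Px := mul_pos hμ hPx
  have hΔLpos : 0 < ΔL := by rw [hΔL]; nlinarith
  have hΔQpos : 0 < ΔQ := by rw [hΔQ]; nlinarith
  have hΔ0pos : 0 < Δ0 := by rw [hΔ0]; nlinarith
  have hΔ0'pos : 0 < Δ0' := by rw [hΔ0']; nlinarith
  have hβ0pos : 0 < β0 := by
    rw [hβ0]
    have h1 : 0 ≤ μ * Px * Δ0' * ΔL * G := by positivity
    have h2 : 0 < 4 * α ^ 2 * ΔQ * (μ * Px * ΔL + Δ0 * ΔQ / Real.pi) := by positivity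
    linarith
  have hβ3pos : 0 < β3 := by rw [hβ3]; positivity
  have hΔLne : ΔL ≠ 0 := ne_of_gt hΔLpos
  have hμne : μ ≠ 0 := ne_of_gt hμ
  have hPxne : Px ≠ 0 := ne_of_gt hPx
  have hsqnn : 0 ≤ Δ0 * β0 / Real.pi := by positivity
  have h2sq : β2 ^ 2 = (4 * α * (L - Q) / (μ ^ 2 * Px ^ 2 * ΔL ^ 2)) ^ 2 * (Δ0 * β0 / Real.pi) := by
    rw [hβ2, mul_pow, Real.sq_sqrt hsqnn]
  have hkey : ΔQ - (L - Q) * (μ * Px) = ΔL := by rw [hΔQ, hΔL]; ring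
  constructor
  · intro hlt
    have hLQ : 0 < L - Q := sub_pos.mpr hlt
    have hβ1pos : 0 < β1 := by
      rw [hβ1]
      have h1 : 0 ≤ Δ0' * G := by positivity
      have h2 : 0 < 4 * (L - Q) * α ^ 2 * (μ * Px + 2 * Δ0 * ΔQ / (Real.pi * ΔL)) := by positivity
      have h3 : 0 < μ ^ 2 * Px ^ 2 * ΔL := by positivity
      exact div_pos (by linarith) h3
    have hβ2pos : 0 < β2 := by
      rw [hβ2]
      have h1 : 0 < Δ0 * β0 / Real.pi := by positivity
      have h2 : 0 < Real.sqrt (Δ0 * β0 / Real.pi) := Real.sqrt_pos.mpr h1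
      positivity
    have hid : β1 ^ 2 - β2 ^ 2 =
        ((Δ0' * G + 4 * α ^ 2 * (L - Q) * (μ * Px)) ^ 2
          + (4 * α ^ 2 * (L - Q)) * (4 * Δ0 * Δ0' * G / Real.pi)) / (μ ^ 2 * Px ^ 2 * ΔL) ^ 2 := by
      have hΔQeq : ΔQ = ΔL + (L - Q) * (μ * Px) := by linarith [hkey]
      rw [hβ1, h2sq, hβ0]
      exact l0LMS_aux_id L Q μ Px α G ΔL ΔQ Δ0 Δ0' Real.pi hμne hPxne hΔLne hπne hΔQeq
    have hnumpos : 0 < (Δ0' * G + 4 * α ^ 2 * (L - Q) * (μ * Px)) ^ 2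
          + (4 * α ^ 2 * (L - Q)) * (4 * Δ0 * Δ0' * G / Real.pi) := by
      have h1 : 0 < (Δ0' * G + 4 * α ^ 2 * (L - Q) * (μ * Px)) ^ 2 := by
        have ha : 0 ≤ Δ0' * G := by positivity
        have hb : 0 < 4 * α ^ 2 * (L - Q) * (μ * Px) :=
          mul_pos (mul_pos (by positivity) hLQ) hm
        positivity
      have h2 : 0 ≤ (4 * α ^ 2 * (L - Q)) * (4 * Δ0 * Δ0' * G / Real.pi) := by positivity
      linarith
    have hpos : 0 < β1 ^ 2 - β2 ^ 2 := by
      rw [hid]; exact div_pos hnumpos (by positivity)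
    have h21 : β2 < β1 := by
      refine lt_of_pow_lt_pow_left₀ 2 hβ1pos.le ?_
      linarith
    have hsqrtlt : Real.sqrt (β1 ^ 2 - β2 ^ 2) < β1 := by
      have h1 : β1 ^ 2 - β2 ^ 2 < β1 ^ 2 := by
        have := pow_pos hβ2pos 2; linarith
      calc Real.sqrt (β1 ^ 2 - β2 ^ 2) < Real.sqrt (β1 ^ 2) :=
            Real.sqrt_lt_sqrt hpos.le h1
        _ = β1 := Real.sqrt_sq hβ1pos.le
    have hneg : (β3 / 2) * (Real.sqrt (β1 ^ 2 - β2 ^ 2) - β1) < 0 :=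
      mul_neg_of_pos_of_neg (by linarith) (by linarith)
    exact ⟨hβ2pos, h21, hneg, by linarith⟩
  · intro heq
    have hLQ : L - Q = 0 := by rw [heq]; ring
    have hβ2zero : β2 = 0 := by rw [hβ2, hLQ]; simp
    have hβ1nn : 0 ≤ β1 := by
      rw [hβ1, hLQ]
      have h1 : 0 ≤ Δ0' * G + 4 * 0 * α ^ 2 * (μ * Px + 2 * Δ0 * ΔQ / (Real.pi * ΔL)) := by
        have : 0 ≤ Δ0' * G := by positivity
        linarith
      positivity
    have : Real.sqrt (β1 ^ 2 - β2 ^ 2) = β1 := by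
      rw [hβ2zero]; simp [Real.sqrt_sq hβ1nn]
    rw [this]
    exact ⟨hβ2zero, by ring⟩
end

section
/- Under the standing parameter assumptions with Q < L, regard the minimum steady-state MSD D^min_∞(G) = μP_vL/Δ_L + (β_3(G)/2)(√(β_1(G)² − β_2(G)²) − β_1(G)) as a function of the attracting strength G, where β_0, β_1, β_2, β_3 depend on G through their definitions. Then D^min_∞ is monotone increasing in G: for all 0 ≤ G ≤ G', D^min_∞(G) ≤ D^min_∞(G'). (Corollary 2, monotonicity in the attracting strength G(s).) -/
/-!
Rationalising, `√(β₁² − β₂²) − β₁ = −β₂² / (√(β₁² − β₂²) + β₁)`, and `β₃ β₂²` does not depend on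
`G` because `β₂² ∝ β₀` and `β₃ ∝ 1 / β₀`. So `D^min_∞(G)` is a constant minus a positive constant
divided by `√(β₁² − β₂²) + β₁`, and it suffices that `β₁` and `β₁² − β₂²` increase in `G`. Both are
polynomials in `G` (of degree one and two); the coefficients of `β₁² − β₂²` are nonnegative since
its linear coefficient is `8 (L − Q) α² Δ'₀ (μP_x + 2Δ₀/π) / ((μP_x)⁴ Δ_L²)` and its constant term is
`(4 (L − Q) α² / (μP_x Δ_L))²`.
-/

open Set

theorem sqrt_sq_sub_sq_sub_eq_neg_div {x y : ℝ} (hx : 0 < x) (hxy : 0 ≤ x ^ 2 - y ^ 2) :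
    √(x ^ 2 - y ^ 2) - x = -y ^ 2 / (√(x ^ 2 - y ^ 2) + x) := by
  rw [eq_div_iff (by positivity)]
  linear_combination Real.sq_sqrt hxy

theorem monotoneOn_add_mul_sqrt_sq_sub_sq_sub {s : Set ℝ} {β₁ β₂ β₃ : ℝ → ℝ} {K : ℝ} (c : ℝ)
    (hK : 0 ≤ K) (hβ₁ : MonotoneOn β₁ s) (hβ₁_pos : ∀ G ∈ s, 0 < β₁ G)
    (hdisc : MonotoneOn (fun G => β₁ G ^ 2 - β₂ G ^ 2) s)
    (hdisc_nonneg : ∀ G ∈ s, 0 ≤ β₁ G ^ 2 - β₂ G ^ 2)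
    (hβ₃ : ∀ G ∈ s, β₃ G * β₂ G ^ 2 = K) :
    MonotoneOn (fun G => c + β₃ G / 2 * (√(β₁ G ^ 2 - β₂ G ^ 2) - β₁ G)) s := by
  have hform : ∀ G ∈ s, c + β₃ G / 2 * (√(β₁ G ^ 2 - β₂ G ^ 2) - β₁ G)
      = c - K / 2 / (√(β₁ G ^ 2 - β₂ G ^ 2) + β₁ G) := by
    intro G hG
    rw [sqrt_sq_sub_sq_sub_eq_neg_div (hβ₁_pos G hG) (hdisc_nonneg G hG), ← hβ₃ G hG]
    ring
  intro G hG G' hG' hGG'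
  have := hβ₁_pos G hG
  have hden : √(β₁ G ^ 2 - β₂ G ^ 2) + β₁ G ≤ √(β₁ G' ^ 2 - β₂ G' ^ 2) + β₁ G' :=
    add_le_add (Real.sqrt_le_sqrt (hdisc hG hG' hGG')) (hβ₁ hG hG' hGG')
  simp only [hform G hG, hform G' hG']
  gcongr

theorem monotoneOn_add_mul_sqrt_sq_sub_sq_sub_of_affine {β₀ β₁ β₂ β₃ : ℝ → ℝ} {a b d e f C : ℝ}
    (c : ℝ) (ha : 0 ≤ a) (hb : 0 < b) (hd : 0 ≤ d) (hC : 0 ≤ C)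
    (hde : d * e ≤ 2 * a * b) (hdf : d * f ≤ b ^ 2)
    (hβ₀ : ∀ G, β₀ G = e * G + f) (hβ₁ : ∀ G, β₁ G = a * G + b)
    (hβ₂ : ∀ G, 0 ≤ G → β₂ G ^ 2 = d * β₀ G) (hβ₃ : ∀ G, 0 ≤ G → β₃ G * β₀ G = C) :
    MonotoneOn (fun G => c + β₃ G / 2 * (√(β₁ G ^ 2 - β₂ G ^ 2) - β₁ G)) (Ici 0) := by
  have hdisc : ∀ G, 0 ≤ G →
      β₁ G ^ 2 - β₂ G ^ 2 = a ^ 2 * G ^ 2 + (2 * a * b - d * e) * G + (b ^ 2 - d * f) := by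
    intro G hG
    rw [hβ₁, hβ₂ G hG, hβ₀]
    ring
  have hlin : 0 ≤ 2 * a * b - d * e := sub_nonneg.mpr hde
  have hconst : 0 ≤ b ^ 2 - d * f := sub_nonneg.mpr hdf
  refine monotoneOn_add_mul_sqrt_sq_sub_sq_sub c (K := d * C) (by positivity) ?_ ?_ ?_ ?_ ?_
  · intro G _ G' _ hGG'
    simp only [hβ₁]
    gcongr
  · intro G (hG : 0 ≤ G)
    rw [hβ₁]
    positivity
  · intro G (hG : 0 ≤ G) G' hG' hGG'
    simp only [hdisc G hG, hdisc G' hG']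
    gcongr
  · intro G (hG : 0 ≤ G)
    rw [hdisc G hG]
    positivity
  · intro G hG
    rw [hβ₂ G hG, ← hβ₃ G hG]
    ring

theorem l0LMS_d_mul_f_le {m n α p ΔL ΔQ Δ0 : ℝ} (hm : m ≠ 0) (hp : p ≠ 0) (hΔL : ΔL ≠ 0) :
    (4 * α * n / (m ^ 2 * ΔL ^ 2)) ^ 2 * Δ0 / p * (4 * α ^ 2 * ΔQ * (m * ΔL + Δ0 * ΔQ / p))
      ≤ (4 * n * α ^ 2 * (m + 2 * Δ0 * ΔQ / (p * ΔL)) / (m ^ 2 * ΔL)) ^ 2 := by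
  have hgap : (4 * n * α ^ 2 * (m + 2 * Δ0 * ΔQ / (p * ΔL)) / (m ^ 2 * ΔL)) ^ 2
      - (4 * α * n / (m ^ 2 * ΔL ^ 2)) ^ 2 * Δ0 / p * (4 * α ^ 2 * ΔQ * (m * ΔL + Δ0 * ΔQ / p))
      = (4 * n * α ^ 2 / (m * ΔL)) ^ 2 := by
    field_simp
    ring
  exact sub_nonneg.mp (hgap ▸ sq_nonneg _)

theorem l0LMS_d_mul_e_le {m n α p ΔL ΔQ Δ0 Δ0' : ℝ} (hm : 0 < m) (hn : 0 ≤ n) (hp : 0 < p)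
    (hΔL : ΔL ≠ 0) (hΔ0 : 0 ≤ Δ0) (hΔ0' : 0 ≤ Δ0') (hΔQ : ΔQ = ΔL + n * m) :
    (4 * α * n / (m ^ 2 * ΔL ^ 2)) ^ 2 * Δ0 / p * (m * Δ0' * ΔL)
      ≤ 2 * (Δ0' / (m ^ 2 * ΔL)) * (4 * n * α ^ 2 * (m + 2 * Δ0 * ΔQ / (p * ΔL)) / (m ^ 2 * ΔL)) := by
  have hgap : 2 * (Δ0' / (m ^ 2 * ΔL))
        * (4 * n * α ^ 2 * (m + 2 * Δ0 * ΔQ / (p * ΔL)) / (m ^ 2 * ΔL))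
      - (4 * α * n / (m ^ 2 * ΔL ^ 2)) ^ 2 * Δ0 / p * (m * Δ0' * ΔL)
      = 8 * n * α ^ 2 * Δ0' * (m + 2 * Δ0 / p) / (m ^ 4 * ΔL ^ 2) := by
    rw [hΔQ]
    field_simp
    ring
  exact sub_nonneg.mp (hgap ▸ by positivity)

theorem l0LMS_min_MSD_monotone_in_G_general
    (L Q μ Px Pv α : ℝ)
    (hL : 1 ≤ L) (hQL : Q < L)
    (hμ : 0 < μ) (hPx : 0 < Px) (hPv : 0 < Pv) (hα : 0 < α)
    (hstab : (L + 2) * μ * Px < 2)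
    (ΔL ΔQ Δ0 Δ0' : ℝ)
    (hΔL : ΔL = 2 - (L + 2) * μ * Px)
    (hΔQ : ΔQ = 2 - (Q + 2) * μ * Px)
    (hΔ0 : Δ0 = 1 - μ * Px)
    (hΔ0' : Δ0' = 2 - μ * Px)
    (β0 β1 β2 β3 Dmin : ℝ → ℝ)
    (hβ0 : ∀ G : ℝ, β0 G = μ * Px * Δ0' * ΔL * G
        + 4 * α ^ 2 * ΔQ * (μ * Px * ΔL + Δ0 * ΔQ / Real.pi))
    (hβ1 : ∀ G : ℝ, β1 G = (Δ0' * G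
        + 4 * (L - Q) * α ^ 2 * (μ * Px + 2 * Δ0 * ΔQ / (Real.pi * ΔL)))
        / (μ ^ 2 * Px ^ 2 * ΔL))
    (hβ2 : ∀ G : ℝ, β2 G = (4 * α * (L - Q) / (μ ^ 2 * Px ^ 2 * ΔL ^ 2))
        * Real.sqrt (Δ0 * β0 G / Real.pi))
    (hβ3 : ∀ G : ℝ, β3 G = 2 * μ ^ 3 * Px ^ 2 * Pv * Δ0 * ΔL / β0 G)
    (hDmin : ∀ G : ℝ, Dmin G = μ * Pv * L / ΔL
        + (β3 G / 2) * (Real.sqrt ((β1 G) ^ 2 - (β2 G) ^ 2) - β1 G)) :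
    ∀ G G' : ℝ, 0 ≤ G → G ≤ G' → Dmin G ≤ Dmin G' := by
  have hπ := Real.pi_pos
  have hm : 0 < μ * Px := mul_pos hμ hPx
  have hn : 0 < L - Q := sub_pos.mpr hQL
  have hΔL_pos : 0 < ΔL := by rw [hΔL]; linarith
  have hΔQ_pos : 0 < ΔQ := by rw [hΔQ]; nlinarith
  have hΔ0_pos : 0 < Δ0 := by rw [hΔ0]; nlinarith
  have hΔ0'_pos : 0 < Δ0' := by rw [hΔ0']; linarith
  have hβ0_pos : ∀ G, 0 ≤ G → 0 < β0 G := fun G hG => by rw [hβ0]; positivity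
  have hβ2_sq : ∀ G, 0 ≤ G → β2 G ^ 2
      = (4 * α * (L - Q) / ((μ * Px) ^ 2 * ΔL ^ 2)) ^ 2 * Δ0 / Real.pi * β0 G := by
    intro G hG
    have := hβ0_pos G hG
    rw [hβ2, mul_pow, Real.sq_sqrt (by positivity)]
    ring
  have hmono : MonotoneOn (fun G => μ * Pv * L / ΔL + β3 G / 2 * (√(β1 G ^ 2 - β2 G ^ 2) - β1 G))
      (Ici 0) :=
    monotoneOn_add_mul_sqrt_sq_sub_sq_sub_of_affine _ (C := 2 * μ ^ 3 * Px ^ 2 * Pv * Δ0 * ΔL)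
      (by positivity) (by positivity) (by positivity) (by positivity)
      (l0LMS_d_mul_e_le hm hn.le hπ hΔL_pos.ne' hΔ0_pos.le hΔ0'_pos.le (by rw [hΔQ, hΔL]; ring))
      (l0LMS_d_mul_f_le hm.ne' hπ.ne' hΔL_pos.ne') hβ0 (fun G => by rw [hβ1]; ring) hβ2_sq
      (fun G hG => by rw [hβ3, div_mul_cancel₀ _ (hβ0_pos G hG).ne'])
  intro G G' hG hGG'
  simpa only [hDmin] using hmono hG (hG.trans hGG') hGG'

/-- Corollary 2 (monotonicity in the attracting strength `G(s)`): for `Q < L`,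
the minimum steady-state MSD
`D^min_∞(G) = μP_vL/Δ_L + (β₃(G)/2)(√(β₁(G)² − β₂(G)²) − β₁(G))`
is monotone increasing in `G ≥ 0`. -/
theorem l0LMS_min_MSD_monotone_in_G
    (L Q μ Px Pv α : ℝ)
    (hL : 1 ≤ L) (hQ0 : 0 ≤ Q) (hQL : Q < L)
    (hμ : 0 < μ) (hPx : 0 < Px) (hPv : 0 < Pv) (hα : 0 < α)
    (hstab : (L + 2) * μ * Px < 2)
    (ΔL ΔQ Δ0 Δ0' : ℝ)
    (hΔL : ΔL = 2 - (L + 2) * μ * Px)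
    (hΔQ : ΔQ = 2 - (Q + 2) * μ * Px)
    (hΔ0 : Δ0 = 1 - μ * Px)
    (hΔ0' : Δ0' = 2 - μ * Px)
    (β0 β1 β2 β3 Dmin : ℝ → ℝ)
    (hβ0 : ∀ G : ℝ, β0 G = μ * Px * Δ0' * ΔL * G
        + 4 * α ^ 2 * ΔQ * (μ * Px * ΔL + Δ0 * ΔQ / Real.pi))
    (hβ1 : ∀ G : ℝ, β1 G = (Δ0' * G
        + 4 * (L - Q) * α ^ 2 * (μ * Px + 2 * Δ0 * ΔQ / (Real.pi * ΔL)))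
        / (μ ^ 2 * Px ^ 2 * ΔL))
    (hβ2 : ∀ G : ℝ, β2 G = (4 * α * (L - Q) / (μ ^ 2 * Px ^ 2 * ΔL ^ 2))
        * Real.sqrt (Δ0 * β0 G / Real.pi))
    (hβ3 : ∀ G : ℝ, β3 G = 2 * μ ^ 3 * Px ^ 2 * Pv * Δ0 * ΔL / β0 G)
    (hDmin : ∀ G : ℝ, Dmin G = μ * Pv * L / ΔL
        + (β3 G / 2) * (Real.sqrt ((β1 G) ^ 2 - (β2 G) ^ 2) - β1 G)) :
    ∀ G G' : ℝ, 0 ≤ G → G ≤ G' → Dmin G ≤ Dmin G' :=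
  l0LMS_min_MSD_monotone_in_G_general L Q μ Px Pv α hL hQL hμ hPx hPv hα hstab ΔL ΔQ Δ0 Δ0' hΔL hΔQ
    hΔ0 hΔ0' β0 β1 β2 β3 Dmin hβ0 hβ1 hβ2 hβ3 hDmin
end

section
/- Under the standing parameter assumptions with G ≥ 0 fixed, regard the minimum steady-state MSD D^min_∞(Q) = μP_vL/Δ_L + (β_3(Q)/2)(√(β_1(Q)² − β_2(Q)²) − β_1(Q)) as a function of the real parameter Q ∈ [0, L], where Δ_Q and β_0, β_1, β_2, β_3 depend on Q through their definitions. Then D^min_∞ is monotone increasing in Q: for all 0 ≤ Q ≤ Q' ≤ L, D^min_∞(Q) ≤ D^min_∞(Q'); moreover D^min_∞(L) = μP_vL/Δ_L, the steady-state MSD of standard LMS. (Corollary 2, monotonicity in the sparsity Q.) -/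
/-!
With `s = L - Q`, rationalising gives
`(β₃/2)(√(β₁² - β₂²) - β₁) = -(β₃/2) β₂² / (β₁ + √(β₁² - β₂²))`.
The factor `β₀` cancels between `β₃` and `β₂²`, `β₁` is a quadratic in `s` with nonnegative
coefficients and so is `β₁² - β₂²`; hence the excess of `D^min_∞` over `μP_vL/Δ_L` is
`-K s² / (N(s) + √W(s))` with `K ≥ 0` and `N`, `W` quadratics with nonnegative coefficients.
After dividing by `s²` the denominator is a sum of nonincreasing functions of `s`, so the ratio
increases with `s`, i.e. decreases with `Q`, and it vanishes at `s = 0`.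
-/

open Real Set

lemma pow_mul_quadratic_le_pow_mul_quadratic {a b c s t : ℝ} (ha : 0 ≤ a) (hb : 0 ≤ b)
    (hc : 0 ≤ c) (ht : 0 ≤ t) (hts : t ≤ s) {n : ℕ} (hn : 2 ≤ n) :
    t ^ n * (a + b * s + c * s ^ 2) ≤ s ^ n * (a + b * t + c * t ^ 2) := by
  obtain ⟨m, rfl⟩ := Nat.exists_eq_add_of_le' hn
  have hst : 0 ≤ s * t := mul_nonneg (ht.trans hts) ht
  calc t ^ (m + 2) * (a + b * s + c * s ^ 2)
      = a * t ^ (m + 2) + b * (t ^ (m + 1) * (s * t)) + c * (t ^ m * (s * t) ^ 2) := by ring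
    _ ≤ a * s ^ (m + 2) + b * (s ^ (m + 1) * (s * t)) + c * (s ^ m * (s * t) ^ 2) := by
        gcongr
    _ = s ^ (m + 2) * (a + b * t + c * t ^ 2) := by ring

lemma monotoneOn_sq_div_quadratic_add_sqrt_quadratic {a b c d e f : ℝ} (ha : 0 ≤ a) (hb : 0 < b)
    (hc : 0 ≤ c) (hd : 0 ≤ d) (he : 0 ≤ e) (hf : 0 ≤ f) :
    MonotoneOn (fun s ↦ s ^ 2 / (a + b * s + c * s ^ 2 + √(d + e * s + f * s ^ 2))) (Ici 0) := by
  intro t (ht : 0 ≤ t) s (hs : 0 ≤ s) hts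
  rcases ht.eq_or_lt with rfl | htpos
  · simp only [ne_eq, OfNat.ofNat_ne_zero, not_false_eq_true, zero_pow, zero_div]
    positivity
  have hspos : 0 < s := htpos.trans_le hts
  rw [div_le_div_iff₀ (by positivity) (by positivity)]
  have hsqrt : t ^ 2 * √(d + e * s + f * s ^ 2) ≤ s ^ 2 * √(d + e * t + f * t ^ 2) := by
    have hmul (x y : ℝ) (hy : 0 ≤ y) : x ^ 2 * √y = √(x ^ 4 * y) := by
      rw [sqrt_mul (by positivity), show x ^ 4 = (x ^ 2) ^ 2 by ring, sqrt_sq (sq_nonneg x)]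
    rw [hmul t _ (by positivity), hmul s _ (by positivity)]
    exact sqrt_le_sqrt <|
      pow_mul_quadratic_le_pow_mul_quadratic hd he hf ht hts (n := 4) (by norm_num)
  linear_combination pow_mul_quadratic_le_pow_mul_quadratic ha hb.le hc ht hts le_rfl + hsqrt

lemma sqrt_sq_sub_sq_sub_self {b c : ℝ} (hb : 0 ≤ b) (hcb : c ^ 2 ≤ b ^ 2) :
    √(b ^ 2 - c ^ 2) - b = -(c ^ 2 / (b + √(b ^ 2 - c ^ 2))) := by
  rcases (add_nonneg hb (sqrt_nonneg (b ^ 2 - c ^ 2))).eq_or_lt with h | h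
  · have hb0 : b = 0 := by linarith [sqrt_nonneg (b ^ 2 - c ^ 2)]
    rw [← h]; simp only [div_zero, neg_zero]; linarith
  rw [eq_neg_iff_add_eq_zero, ← sub_eq_zero]
  field_simp
  linear_combination sq_sqrt (sub_nonneg.2 hcb)

lemma minMSD_excess_eq {μ Px Pv α G ΔL Δ0 Δ0' A B s ΔQ β0 β1 β2 β3 : ℝ}
    (hμ : 0 < μ) (hPx : 0 < Px) (hα : 0 < α) (hG : 0 ≤ G) (hΔL : 0 < ΔL) (hΔ0 : 0 < Δ0)
    (hΔ0' : 0 < Δ0') (hs : 0 ≤ s)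
    (hA : A = 4 * α ^ 2 * (μ * Px + 2 * Δ0 / π))
    (hB : B = 8 * α ^ 2 * Δ0 * μ * Px / (π * ΔL))
    (hΔQ : ΔQ = ΔL + s * (μ * Px))
    (hβ0 : β0 = μ * Px * Δ0' * ΔL * G + 4 * α ^ 2 * ΔQ * (μ * Px * ΔL + Δ0 * ΔQ / π))
    (hβ1 : β1 = (Δ0' * G + 4 * s * α ^ 2 * (μ * Px + 2 * Δ0 * ΔQ / (π * ΔL)))
      / (μ ^ 2 * Px ^ 2 * ΔL))
    (hβ2 : β2 = (4 * α * s / (μ ^ 2 * Px ^ 2 * ΔL ^ 2)) * √(Δ0 * β0 / π))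
    (hβ3 : β3 = 2 * μ ^ 3 * Px ^ 2 * Pv * Δ0 * ΔL / β0) :
    β3 / 2 * (√(β1 ^ 2 - β2 ^ 2) - β1) = -(16 * μ * Pv * Δ0 ^ 2 * α ^ 2 / (π * ΔL ^ 2)) *
      (s ^ 2 / (Δ0' * G + A * s + B * s ^ 2
        + √((Δ0' * G) ^ 2 + 2 * Δ0' * G * A * s + (4 * α ^ 2 * μ * Px) ^ 2 * s ^ 2))) := by
  have hΔQpos : 0 < ΔQ := by rw [hΔQ]; positivity
  have hβ0pos : 0 < β0 := by rw [hβ0]; positivity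
  set N := Δ0' * G + A * s + B * s ^ 2 with hN
  set W := (Δ0' * G) ^ 2 + 2 * Δ0' * G * A * s + (4 * α ^ 2 * μ * Px) ^ 2 * s ^ 2 with hW
  have hβ1N : β1 = N / (μ ^ 2 * Px ^ 2 * ΔL) := by
    rw [hβ1, hN, hΔQ, hA, hB]; field_simp; ring
  have hdisc : β1 ^ 2 - β2 ^ 2 = W / (μ ^ 2 * Px ^ 2 * ΔL) ^ 2 := by
    rw [hβ1N, hβ2, mul_pow, sq_sqrt (by positivity), hβ0, hN, hW, hΔQ, hA, hB]
    field_simp; ring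
  have hβ1nonneg : 0 ≤ β1 := by rw [hβ1N, hN, hA, hB]; positivity
  have hβ2le : β2 ^ 2 ≤ β1 ^ 2 := sub_nonneg.1 (by rw [hdisc, hW, hA]; positivity)
  rw [sqrt_sq_sub_sq_sub_self hβ1nonneg hβ2le, hdisc, sqrt_div' _ (sq_nonneg _),
    sqrt_sq (by positivity), hβ1N, ← add_div, div_div_eq_mul_div, hβ2, mul_pow,
    sq_sqrt (by positivity), hβ3]
  field_simp
  ring

/-- Corollary 2 (monotonicity in the sparsity `Q`): fixing `G ≥ 0`, the minimum
steady-state MSD `D^min_∞(Q)` is monotone increasing in the real parameter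
`Q ∈ [0, L]`, and `D^min_∞(L) = μP_vL/Δ_L`, the steady-state MSD of standard LMS. -/
theorem l0LMS_min_MSD_monotone_in_Q
    (L μ Px Pv α G : ℝ)
    (hL : 1 ≤ L)
    (hμ : 0 < μ) (hPx : 0 < Px) (hPv : 0 < Pv) (hα : 0 < α) (hG : 0 ≤ G)
    (hstab : (L + 2) * μ * Px < 2)
    (ΔL Δ0 Δ0' : ℝ)
    (hΔL : ΔL = 2 - (L + 2) * μ * Px)
    (hΔ0 : Δ0 = 1 - μ * Px)
    (hΔ0' : Δ0' = 2 - μ * Px)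
    (ΔQ β0 β1 β2 β3 Dmin : ℝ → ℝ)
    (hΔQ : ∀ Q : ℝ, ΔQ Q = 2 - (Q + 2) * μ * Px)
    (hβ0 : ∀ Q : ℝ, β0 Q = μ * Px * Δ0' * ΔL * G
        + 4 * α ^ 2 * ΔQ Q * (μ * Px * ΔL + Δ0 * ΔQ Q / Real.pi))
    (hβ1 : ∀ Q : ℝ, β1 Q = (Δ0' * G
        + 4 * (L - Q) * α ^ 2 * (μ * Px + 2 * Δ0 * ΔQ Q / (Real.pi * ΔL)))
        / (μ ^ 2 * Px ^ 2 * ΔL))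
    (hβ2 : ∀ Q : ℝ, β2 Q = (4 * α * (L - Q) / (μ ^ 2 * Px ^ 2 * ΔL ^ 2))
        * Real.sqrt (Δ0 * β0 Q / Real.pi))
    (hβ3 : ∀ Q : ℝ, β3 Q = 2 * μ ^ 3 * Px ^ 2 * Pv * Δ0 * ΔL / β0 Q)
    (hDmin : ∀ Q : ℝ, Dmin Q = μ * Pv * L / ΔL
        + (β3 Q / 2) * (Real.sqrt ((β1 Q) ^ 2 - (β2 Q) ^ 2) - β1 Q)) :
    (∀ Q Q' : ℝ, 0 ≤ Q → Q ≤ Q' → Q' ≤ L → Dmin Q ≤ Dmin Q') ∧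
    Dmin L = μ * Pv * L / ΔL := by
  have hΔLpos : 0 < ΔL := by rw [hΔL]; linarith
  have hΔ0pos : 0 < Δ0 := by
    rw [hΔ0]; nlinarith [mul_le_mul_of_nonneg_right hL (mul_pos hμ hPx).le]
  have hΔ0'pos : 0 < Δ0' := by rw [hΔ0']; linarith
  set A := 4 * α ^ 2 * (μ * Px + 2 * Δ0 / π)
  have hApos : 0 < A := by positivity
  set g := fun s ↦ s ^ 2 / (Δ0' * G + A * s + 8 * α ^ 2 * Δ0 * μ * Px / (π * ΔL) * s ^ 2
    + √((Δ0' * G) ^ 2 + 2 * Δ0' * G * A * s + (4 * α ^ 2 * μ * Px) ^ 2 * s ^ 2)) with hg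
  have hDmin_eq (Q : ℝ) (hQ : Q ≤ L) :
      Dmin Q = μ * Pv * L / ΔL - 16 * μ * Pv * Δ0 ^ 2 * α ^ 2 / (π * ΔL ^ 2) * g (L - Q) := by
    rw [hDmin, minMSD_excess_eq hμ hPx hα hG hΔLpos hΔ0pos hΔ0'pos (sub_nonneg.2 hQ) rfl rfl
      (by rw [hΔQ, hΔL]; ring) (hβ0 Q) (hβ1 Q) (hβ2 Q) (hβ3 Q)]
    ring
  have hg_mono : MonotoneOn g (Ici 0) :=
    monotoneOn_sq_div_quadratic_add_sqrt_quadratic (by positivity) hApos (by positivity)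
      (by positivity) (by positivity) (by positivity)
  refine ⟨fun Q Q' _ hQQ' hQ'L ↦ ?_, by simp [hDmin_eq L le_rfl, hg]⟩
  rw [hDmin_eq Q (hQQ'.trans hQ'L), hDmin_eq Q' hQ'L]
  have hg_le : g (L - Q') ≤ g (L - Q) :=
    hg_mono (sub_nonneg.2 hQ'L) (sub_nonneg.2 (hQQ'.trans hQ'L)) (by linarith)
  gcongr
end

section
/- Fix reals L ≥ 1, P_x > 0, P_v > 0, α > 0 and G ≥ 0. The function μ ↦ (μP_vL/Δ_L(μ))·(1 − η_6(μ)/(η_5(μ) + η_6(μ) + √(η_5(μ)² + 32α²LG/π))), where Δ_L(μ) = 2 − (L+2)μP_x, η_5(μ) = 4α²P_xμ + 2GL and η_6(μ) = 16α²L/(πΔ_L(μ)), is strictly increasing on the interval (0, 2/((L+2)P_x)). (Corollary 3: the approximate minimum steady-state MSD of l_0-LMS for sparse systems is increasing in the step size μ.) -/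
/-- Corollary 3: the approximate minimum steady-state MSD of l₀-LMS for sparse
systems, as a function of the step size `μ`, is strictly increasing on
`(0, 2/((L+2)P_x))`. -/
theorem l0LMS_sparse_min_MSD_increasing_in_mu
    (L Px Pv α G : ℝ)
    (hL : 1 ≤ L) (hPx : 0 < Px) (hPv : 0 < Pv) (hα : 0 < α) (hG : 0 ≤ G)
    (ΔL η5 η6 D : ℝ → ℝ)
    (hΔL : ∀ μ : ℝ, ΔL μ = 2 - (L + 2) * μ * Px)
    (hη5 : ∀ μ : ℝ, η5 μ = 4 * α ^ 2 * Px * μ + 2 * G * L)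
    (hη6 : ∀ μ : ℝ, η6 μ = 16 * α ^ 2 * L / (Real.pi * ΔL μ))
    (hD : ∀ μ : ℝ, D μ = (μ * Pv * L / ΔL μ) *
        (1 - η6 μ / (η5 μ + η6 μ + Real.sqrt ((η5 μ) ^ 2 + 32 * α ^ 2 * L * G / Real.pi)))) :
    StrictMonoOn D (Set.Ioo 0 (2 / ((L + 2) * Px))) := by
  have hπ : 0 < Real.pi := Real.pi_pos
  have hL0 : 0 < L := lt_of_lt_of_le one_pos hL
  have hk : 0 < (L + 2) * Px := by positivity
  have hc0 : 0 ≤ 32 * α ^ 2 * L * G / Real.pi := by positivity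
  have hmpos : 0 < 16 * α ^ 2 * L / Real.pi := by positivity
  have hbpos : 0 < 16 * α ^ 2 * L := by positivity
  -- key facts on the interval
  have key : ∀ μ ∈ Set.Ioo (0:ℝ) (2 / ((L + 2) * Px)),
      0 < ΔL μ ∧ 0 < η5 μ ∧
      η5 μ ≤ Real.sqrt ((η5 μ) ^ 2 + 32 * α ^ 2 * L * G / Real.pi) ∧
      D μ = μ * Pv * L * (η5 μ + Real.sqrt ((η5 μ) ^ 2 + 32 * α ^ 2 * L * G / Real.pi)) /
        ((η5 μ + Real.sqrt ((η5 μ) ^ 2 + 32 * α ^ 2 * L * G / Real.pi)) * ΔL μ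
          + 16 * α ^ 2 * L / Real.pi) := by
    rintro μ ⟨hμ0, hμ2⟩
    have hΔ : 0 < ΔL μ := by
      rw [hΔL]
      have h2 : μ * ((L + 2) * Px) < 2 := (lt_div_iff₀ hk).mp hμ2
      nlinarith
    have hη5p : 0 < η5 μ := by
      rw [hη5]
      nlinarith [mul_pos (mul_pos (pow_pos hα 2) hPx) hμ0, mul_nonneg hG hL0.le]
    obtain ⟨S, hSdef⟩ : ∃ S : ℝ,
        S = Real.sqrt ((η5 μ) ^ 2 + 32 * α ^ 2 * L * G / Real.pi) := ⟨_, rfl⟩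
    have hle : η5 μ ≤ S := by
      rw [hSdef]
      have h := Real.sqrt_le_sqrt
        (by linarith : (η5 μ) ^ 2 ≤ (η5 μ) ^ 2 + 32 * α ^ 2 * L * G / Real.pi)
      rwa [Real.sqrt_sq hη5p.le] at h
    have hT : 0 < η5 μ + S := by linarith
    refine ⟨hΔ, hη5p, by rw [← hSdef]; exact hle, ?_⟩
    rw [hD, hη6, ← hSdef]
    have hπΔ : Real.pi * ΔL μ ≠ 0 := by positivity
    have hNpos : 0 < (η5 μ + S) * (Real.pi * ΔL μ) + 16 * α ^ 2 * L :=
      add_pos (mul_pos hT (by positivity)) hbpos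
    have hN : (η5 μ + S) * (Real.pi * ΔL μ) + 16 * α ^ 2 * L ≠ 0 := hNpos.ne'
    have hden2 : (η5 μ + S) * ΔL μ + 16 * α ^ 2 * L / Real.pi ≠ 0 := by
      have : 0 < (η5 μ + S) * ΔL μ + 16 * α ^ 2 * L / Real.pi :=
        add_pos (mul_pos hT hΔ) hmpos
      exact this.ne'
    rw [show η5 μ + 16 * α ^ 2 * L / (Real.pi * ΔL μ) + S
        = ((η5 μ + S) * (Real.pi * ΔL μ) + 16 * α ^ 2 * L) / (Real.pi * ΔL μ) by
      field_simp; ring]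
    rw [div_div_div_cancel_right₀ _ _]
    · field_simp
      ring
    · exact hπΔ
  intro μ1 hμ1 μ2 hμ2 h12
  obtain ⟨hΔ1, hη51, hle1, hD1⟩ := key μ1 hμ1
  obtain ⟨hΔ2, hη52, hle2, hD2⟩ := key μ2 hμ2
  obtain ⟨S1, hS1⟩ : ∃ S : ℝ,
      S = Real.sqrt ((η5 μ1) ^ 2 + 32 * α ^ 2 * L * G / Real.pi) := ⟨_, rfl⟩
  obtain ⟨S2, hS2⟩ : ∃ S : ℝ,
      S = Real.sqrt ((η5 μ2) ^ 2 + 32 * α ^ 2 * L * G / Real.pi) := ⟨_, rfl⟩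
  rw [← hS1] at hle1 hD1
  rw [← hS2] at hle2 hD2
  have hμ10 : 0 < μ1 := hμ1.1
  have hμ20 : 0 < μ2 := hμ2.1
  have hη5le : η5 μ1 < η5 μ2 := by
    rw [hη5, hη5]
    nlinarith [mul_pos (pow_pos hα 2) hPx]
  have hSle : S1 ≤ S2 := by
    rw [hS1, hS2]
    apply Real.sqrt_le_sqrt
    nlinarith
  have hT1 : 0 < η5 μ1 + S1 := by linarith
  have hT2 : 0 < η5 μ2 + S2 := by linarith
  have hTle : η5 μ1 + S1 < η5 μ2 + S2 := by linarith
  have hmix : μ1 * ΔL μ2 < μ2 * ΔL μ1 := by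
    rw [hΔL, hΔL]
    have : μ2 * (2 - (L + 2) * μ2 * Px) - μ1 * (2 - (L + 2) * μ2 * Px)
        = 2 * (μ2 - μ1) - (L + 2) * μ2 * Px * (μ2 - μ1) := by ring
    nlinarith
  have hμT : μ1 * (η5 μ1 + S1) < μ2 * (η5 μ2 + S2) :=
    lt_trans (mul_lt_mul_of_pos_right h12 hT1) (mul_lt_mul_of_pos_left hTle hμ20)
  rw [hD1, hD2]
  rw [div_lt_div_iff₀
    (add_pos (mul_pos hT1 hΔ1) hmpos) (add_pos (mul_pos hT2 hΔ2) hmpos)]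
  have hPvL : 0 < Pv * L := mul_pos hPv hL0
  have h1 : (η5 μ1 + S1) * (η5 μ2 + S2) * (μ1 * ΔL μ2)
      < (η5 μ1 + S1) * (η5 μ2 + S2) * (μ2 * ΔL μ1) :=
    mul_lt_mul_of_pos_left hmix (mul_pos hT1 hT2)
  have h2 : (16 * α ^ 2 * L / Real.pi) * (μ1 * (η5 μ1 + S1))
      < (16 * α ^ 2 * L / Real.pi) * (μ2 * (η5 μ2 + S2)) :=
    mul_lt_mul_of_pos_left hμT hmpos
  have h3 := mul_lt_mul_of_pos_left (add_lt_add h1 h2) hPvL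
  linarith [h3]
end

section
/- Let μ, P_x, α, κ, ω > 0 and L > Q ≥ 0 be reals with (L+2)μP_x < 2, and set Δ_0 = 1 − μP_x > 0, Δ_L = 2 − (L+2)μP_x, a_00 = 1 − μP_xΔ_L, a_01 = −√(8/π)·(ακ/ω)·Δ_0, a_10 = (L−Q)μ²P_x², a_11 = 1 − 2μP_xΔ_0 − √(8/π)·(ακ/ω)·Δ_0. Then the quadratic p(x) = (x − a_00)(x − a_11) − a_01a_10 (the characteristic polynomial of the 2×2 matrix A with these entries) has two real roots λ_1 ≤ λ_2, and they satisfy a_11 < λ_1 ≤ (a_00 + a_11)/2 ≤ λ_2 < a_00 = 1 − μP_xΔ_L. (Eigenvalue localization for the transition matrix A, Appendix H.) -/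
/-- Eigenvalue localization for the transition matrix `A` of the l₀-LMS MSD recursion
(Appendix H): the characteristic polynomial `p(x) = (x − a₀₀)(x − a₁₁) − a₀₁a₁₀` has two
real roots `λ₁ ≤ λ₂` satisfying `a₁₁ < λ₁ ≤ (a₀₀+a₁₁)/2 ≤ λ₂ < a₀₀ = 1 − μP_xΔ_L`. -/
theorem l0LMS_eigenvalue_localization
    (L Q μ Px α κ ω : ℝ)
    (hμ : 0 < μ) (hPx : 0 < Px) (hα : 0 < α) (hκ : 0 < κ) (hω : 0 < ω)
    (hQ0 : 0 ≤ Q) (hQL : Q < L)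
    (hstab : (L + 2) * μ * Px < 2)
    (Δ0 ΔL a00 a01 a10 a11 : ℝ)
    (hΔ0 : Δ0 = 1 - μ * Px)
    (hΔL : ΔL = 2 - (L + 2) * μ * Px)
    (ha00 : a00 = 1 - μ * Px * ΔL)
    (ha01 : a01 = -(Real.sqrt (8 / Real.pi) * (α * κ / ω) * Δ0))
    (ha10 : a10 = (L - Q) * μ ^ 2 * Px ^ 2)
    (ha11 : a11 = 1 - 2 * μ * Px * Δ0 - Real.sqrt (8 / Real.pi) * (α * κ / ω) * Δ0)
    (p : ℝ → ℝ)
    (hp : ∀ x : ℝ, p x = (x - a00) * (x - a11) - a01 * a10) :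
    ∃ l1 l2 : ℝ, l1 ≤ l2 ∧ p l1 = 0 ∧ p l2 = 0 ∧
      (∀ x : ℝ, p x = 0 → x = l1 ∨ x = l2) ∧
      a11 < l1 ∧ l1 ≤ (a00 + a11) / 2 ∧ (a00 + a11) / 2 ≤ l2 ∧ l2 < a00 := by
  have hπ := Real.pi_pos
  set s := Real.sqrt (8 / Real.pi) with hs
  have hspos : 0 < s := Real.sqrt_pos.2 (by positivity)
  have hLpos : 0 < L := lt_of_le_of_lt hQ0 hQL
  have hΔ0pos : 0 < Δ0 := by rw [hΔ0]; nlinarith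
  have hvpos : 0 < s * (α * κ / ω) * Δ0 := by positivity
  have hupos : 0 < L * μ ^ 2 * Px ^ 2 := by positivity
  have hd : a00 - a11 = L * μ ^ 2 * Px ^ 2 + s * (α * κ / ω) * Δ0 := by
    rw [ha00, ha11, hΔ0, hΔL]; ring
  have hprod : a01 * a10 = -(s * (α * κ / ω) * Δ0 * ((L - Q) * μ ^ 2 * Px ^ 2)) := by
    rw [ha01, ha10]; ring
  set D := ((a00 - a11) / 2) ^ 2 + a01 * a10 with hD
  have hcle : s * (α * κ / ω) * Δ0 * ((L - Q) * μ ^ 2 * Px ^ 2)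
      ≤ s * (α * κ / ω) * Δ0 * (L * μ ^ 2 * Px ^ 2) := by
    apply mul_le_mul_of_nonneg_left _ hvpos.le
    nlinarith
  have hDpos : 0 ≤ D := by
    rw [hD, hd, hprod]
    nlinarith [sq_nonneg (L * μ ^ 2 * Px ^ 2 - s * (α * κ / ω) * Δ0)]
  have hdpos : 0 < (a00 - a11) / 2 := by rw [hd]; linarith
  have hcpos : 0 < s * (α * κ / ω) * Δ0 * ((L - Q) * μ ^ 2 * Px ^ 2) :=
    mul_pos hvpos (mul_pos (mul_pos (sub_pos.2 hQL) (pow_pos hμ 2)) (pow_pos hPx 2))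
  have hDlt : D < ((a00 - a11) / 2) ^ 2 := by
    rw [hD, hprod]; linarith
  set r := Real.sqrt D with hr
  have hrnn : 0 ≤ r := Real.sqrt_nonneg D
  have hr2 : r ^ 2 = D := Real.sq_sqrt hDpos
  have hrlt : r < (a00 - a11) / 2 :=
    lt_of_pow_lt_pow_left₀ 2 hdpos.le (by rw [hr2]; exact hDlt)
  refine ⟨(a00 + a11) / 2 - r, (a00 + a11) / 2 + r, by linarith, ?_, ?_, ?_, by linarith,
    by linarith, by linarith, by linarith⟩
  · rw [hp]; linear_combination hr2 - hD
  · rw [hp]; linear_combination hr2 - hD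
  · intro x hx
    rw [hp] at hx
    have hfac : (x - ((a00 + a11) / 2 - r)) * (x - ((a00 + a11) / 2 + r)) = 0 := by
      linear_combination hx - hr2
    rcases mul_eq_zero.1 hfac with h | h
    · exact Or.inl (by linarith [sub_eq_zero.1 h])
    · exact Or.inr (by linarith [sub_eq_zero.1 h])
end

section
/- Let μ, P_x, α, κ, ω > 0 and L > Q ≥ 0 be reals with 1 < (L+2)μP_x < 2, and set Δ_0 = 1 − μP_x, Δ_L = 2 − (L+2)μP_x, a_00 = 1 − μP_xΔ_L, a_01 = −√(8/π)·(ακ/ω)·Δ_0, a_10 = (L−Q)μ²P_x², a_11 = 1 − 2μP_xΔ_0 − √(8/π)·(ακ/ω)·Δ_0, λ_3 = Δ_0 = 1 − μP_x. If λ_1 ≤ λ_2 are the two real roots of p(x) = (x − a_00)(x − a_11) − a_01a_10, then max{λ_1, λ_2, λ_3} < 1 − μP_xΔ_L. (Corollary 4: for step size μ ∈ (μ_max/2, μ_max) with μ_max = 2/((L+2)P_x), all three transient modes of l_0-LMS decay faster than the LMS geometric factor 1 − μP_xΔ_L.) -/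
/-- Corollary 4: for large step size (`1 < (L+2)μP_x < 2`), all three transient modes
`λ₁, λ₂, λ₃` of the l₀-LMS MSD recursion decay faster than the LMS geometric factor
`1 − μP_xΔ_L`. -/
theorem l0LMS_faster_convergence_large_stepsize
    (L Q μ Px α κ ω : ℝ)
    (hμ : 0 < μ) (hPx : 0 < Px) (hα : 0 < α) (hκ : 0 < κ) (hω : 0 < ω)
    (hQ0 : 0 ≤ Q) (hQL : Q < L)
    (hstab_lo : 1 < (L + 2) * μ * Px) (hstab_hi : (L + 2) * μ * Px < 2)
    (Δ0 ΔL a00 a01 a10 a11 l3 : ℝ)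
    (hΔ0 : Δ0 = 1 - μ * Px)
    (hΔL : ΔL = 2 - (L + 2) * μ * Px)
    (ha00 : a00 = 1 - μ * Px * ΔL)
    (ha01 : a01 = -(Real.sqrt (8 / Real.pi) * (α * κ / ω) * Δ0))
    (ha10 : a10 = (L - Q) * μ ^ 2 * Px ^ 2)
    (ha11 : a11 = 1 - 2 * μ * Px * Δ0 - Real.sqrt (8 / Real.pi) * (α * κ / ω) * Δ0)
    (hl3 : l3 = Δ0)
    (p : ℝ → ℝ)
    (hp : ∀ x : ℝ, p x = (x - a00) * (x - a11) - a01 * a10)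
    (l1 l2 : ℝ) (hl12 : l1 ≤ l2) (hroot1 : p l1 = 0) (hroot2 : p l2 = 0) :
    max l1 (max l2 l3) < 1 - μ * Px * ΔL := by
  have hμPx : 0 < μ * Px := mul_pos hμ hPx
  have hL : 0 < L := lt_of_le_of_lt hQ0 hQL
  have hS : 0 < Real.sqrt (8 / Real.pi) * (α * κ / ω) := by
    apply mul_pos
    · exact Real.sqrt_pos.mpr (by positivity)
    · positivity
  have hΔ0pos : 0 < Δ0 := by
    rw [hΔ0]
    nlinarith [mul_pos hL hμPx]
  have hΔLpos : 0 < ΔL := by rw [hΔL]; linarith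
  have hΔL1 : ΔL < 1 := by rw [hΔL]; linarith
  have ha01neg : a01 < 0 := by
    rw [ha01]
    have := mul_pos hS hΔ0pos
    linarith
  have ha10pos : 0 < a10 := by
    rw [ha10]
    have : 0 < L - Q := by linarith
    positivity
  have h1101 : a11 < a00 := by
    rw [ha00, ha11, hΔ0, hΔL]
    nlinarith [mul_pos hS hΔ0pos, mul_pos (mul_pos hL hμPx) hμPx, hΔ0]
  have key : ∀ l : ℝ, p l = 0 → l < a00 := by
    intro l hl
    by_contra h
    push_neg at h
    have hprod : (l - a00) * (l - a11) = a01 * a10 := by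
      have := hp l
      linarith
    have hneg : a01 * a10 < 0 := mul_neg_of_neg_of_pos ha01neg ha10pos
    have hnn : 0 ≤ (l - a00) * (l - a11) :=
      mul_nonneg (by linarith) (by linarith)
    linarith
  have h1 : l1 < a00 := key l1 hroot1
  have h2 : l2 < a00 := key l2 hroot2
  have h3 : l3 < a00 := by
    rw [hl3, hΔ0, ha00]
    nlinarith
  rw [show 1 - μ * Px * ΔL = a00 from ha00.symm]
  exact max_lt h1 (max_lt h2 h3)
end

section
/- Under the standing parameter assumptions with Q = 0 and G = 0: μP_vL/Δ_L + (β_3/2)(√(β_1² − β_2²) − β_1) = μP_vL/Δ_L − 2μP_vLΔ_0²/(2Δ_LΔ_0² + πμP_xΔ_L²). (Remark 6, equation (19): the minimum steady-state MSD of l_0-LMS for an all-zero system is independent of α.) -/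
set_option maxHeartbeats 1600000


/-- Remark 6, equation (19): for an all-zero system (`Q = 0`, `G = 0`) the minimum
steady-state MSD of l₀-LMS equals
`μP_vL/Δ_L − 2μP_vLΔ₀²/(2Δ_LΔ₀² + πμP_xΔ_L²)`, independent of `α`. -/
theorem l0LMS_min_MSD_all_zero_system
    (L μ Px Pv α : ℝ)
    (hL : 1 ≤ L)
    (hμ : 0 < μ) (hPx : 0 < Px) (hPv : 0 < Pv) (hα : 0 < α)
    (hstab : (L + 2) * μ * Px < 2)
    (ΔL ΔQ Δ0 Δ0' β0 β1 β2 β3 : ℝ)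
    (hΔL : ΔL = 2 - (L + 2) * μ * Px)
    (hΔQ : ΔQ = 2 - 2 * μ * Px)
    (hΔ0 : Δ0 = 1 - μ * Px)
    (hΔ0' : Δ0' = 2 - μ * Px)
    (hβ0 : β0 = 4 * α ^ 2 * ΔQ * (μ * Px * ΔL + Δ0 * ΔQ / Real.pi))
    (hβ1 : β1 = 4 * L * α ^ 2 * (μ * Px + 2 * Δ0 * ΔQ / (Real.pi * ΔL))
        / (μ ^ 2 * Px ^ 2 * ΔL))
    (hβ2 : β2 = (4 * α * L / (μ ^ 2 * Px ^ 2 * ΔL ^ 2)) * Real.sqrt (Δ0 * β0 / Real.pi))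
    (hβ3 : β3 = 2 * μ ^ 3 * Px ^ 2 * Pv * Δ0 * ΔL / β0) :
    μ * Pv * L / ΔL + (β3 / 2) * (Real.sqrt (β1 ^ 2 - β2 ^ 2) - β1)
      = μ * Pv * L / ΔL
        - 2 * μ * Pv * L * Δ0 ^ 2 / (2 * ΔL * Δ0 ^ 2 + Real.pi * μ * Px * ΔL ^ 2) := by
  have hπ := Real.pi_pos
  have hμPx : μ * Px < 2 / 3 := by nlinarith
  have hΔLpos : 0 < ΔL := by rw [hΔL]; linarith
  have hΔ0pos : 0 < Δ0 := by rw [hΔ0]; linarith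
  have hΔQpos : 0 < ΔQ := by rw [hΔQ]; linarith
  have hLpos : 0 < L := by linarith
  have hβ0pos : 0 < β0 := by
    rw [hβ0]
    have : 0 < μ * Px * ΔL + Δ0 * ΔQ / Real.pi := by positivity
    positivity
  have hnn : 0 ≤ Δ0 * β0 / Real.pi := by positivity
  have hβ2sq : β2 ^ 2 = (4 * α * L / (μ ^ 2 * Px ^ 2 * ΔL ^ 2)) ^ 2 * (Δ0 * β0 / Real.pi) := by
    rw [hβ2, mul_pow, Real.sq_sqrt hnn]
  have key : β1 ^ 2 - β2 ^ 2 = (4 * L * α ^ 2 / (μ * Px * ΔL)) ^ 2 := by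
    rw [hβ2sq, hβ1, hβ0, hΔQ, hΔ0]
    field_simp
    ring
  have hsqrt : Real.sqrt (β1 ^ 2 - β2 ^ 2) = 4 * L * α ^ 2 / (μ * Px * ΔL) := by
    rw [key, Real.sqrt_sq (by positivity)]
  have hΔQ2 : ΔQ = 2 * Δ0 := by rw [hΔQ, hΔ0]; ring
  have hdiff : 4 * L * α ^ 2 / (μ * Px * ΔL) - β1
      = -(16 * L * α ^ 2 * Δ0 ^ 2 / (Real.pi * (μ ^ 2 * Px ^ 2 * ΔL ^ 2))) := by
    rw [hβ1, hΔQ2]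
    field_simp
    ring
  have hβ0' : β0 = 8 * α ^ 2 * Δ0 * (μ * Px * ΔL + 2 * Δ0 ^ 2 / Real.pi) := by
    rw [hβ0, hΔQ2]; ring
  have hq : (0:ℝ) < μ * Px * ΔL + 2 * Δ0 ^ 2 / Real.pi := by positivity
  have hden : (0:ℝ) < 2 * ΔL * Δ0 ^ 2 + Real.pi * μ * Px * ΔL ^ 2 := by positivity
  have hprod : β3 / 2 * (-(16 * L * α ^ 2 * Δ0 ^ 2 / (Real.pi * (μ ^ 2 * Px ^ 2 * ΔL ^ 2))))
      = -(2 * μ * Pv * L * Δ0 ^ 2 / (2 * ΔL * Δ0 ^ 2 + Real.pi * μ * Px * ΔL ^ 2)) := by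
    rw [hβ3, hβ0']
    field_simp
    ring
  rw [hsqrt, hdiff, hprod]
  ring
end

section
/- Let μ, P_x, α, κ, ω > 0 and L > Q ≥ 0 be reals with (L+2)μP_x < 2; set Δ_0 = 1 − μP_x, Δ_L = 2 − (L+2)μP_x, and let A be the 2×2 real matrix with entries a_00 = 1 − μP_xΔ_L, a_01 = −√(8/π)(ακ/ω)Δ_0, a_10 = (L−Q)μ²P_x², a_11 = 1 − 2μP_xΔ_0 − √(8/π)(ακ/ω)Δ_0. Assume the two real roots λ_1 ≤ λ_2 of the characteristic polynomial of A are distinct and neither equals 1. Then for every b ∈ ℝ² and every sequence v : ℕ → ℝ² with v_{n+1} = A·v_n + b for all n, there exist real constants c_1, c_2 such that the first component of v_n equals c_1λ_1^n + c_2λ_2^n + d for all n, where d is the first component of (I − A)^{−1}b; moreover λ_1, λ_2 < 1 − μP_xΔ_L. (Corollary 5: when the system has no small coefficients, i.e. G(s) = G'(s) = 0, the forcing term of the MSD recursion is constant in n, and the transient of l_0-LMS consists only of modes strictly below the LMS decay factor 1 − μP_xΔ_L.) -/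
lemma rec_solve (a b c d l1 l2 : ℝ) (hne : l1 ≠ l2)
    (ht : a + d = l1 + l2) (hD : a * d - b * c = l1 * l2)
    (p q : ℕ → ℝ)
    (hp : ∀ n, p (n + 1) = a * p n + b * q n)
    (hq : ∀ n, q (n + 1) = c * p n + d * q n) :
    ∃ c1 c2 : ℝ, ∀ n, p n = c1 * l1 ^ n + c2 * l2 ^ n := by
  have hstep : ∀ n, p (n + 2) = (l1 + l2) * p (n + 1) - (l1 * l2) * p n := by
    intro n
    have e1 := hp n
    have e2 := hp (n + 1)
    have e3 := hq n
    linear_combination e2 + b * e3 - d * e1 + p (n + 1) * ht - p n * hD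
  have hd0 : l2 - l1 ≠ 0 := sub_ne_zero.mpr (Ne.symm hne)
  refine ⟨(l2 * p 0 - p 1) / (l2 - l1), (p 1 - l1 * p 0) / (l2 - l1), ?_⟩
  have key : ∀ n, p n = (l2 * p 0 - p 1) / (l2 - l1) * l1 ^ n + (p 1 - l1 * p 0) / (l2 - l1) * l2 ^ n ∧
      p (n + 1) = (l2 * p 0 - p 1) / (l2 - l1) * l1 ^ (n + 1) + (p 1 - l1 * p 0) / (l2 - l1) * l2 ^ (n + 1) := by
    intro n
    induction n with
    | zero => constructor <;> (field_simp; ring)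
    | succ n ih =>
      refine ⟨ih.2, ?_⟩
      rw [hstep n, ih.1, ih.2]; ring
  exact fun n => (key n).1

lemma charpoly_eval_fin_two (A : Matrix (Fin 2) (Fin 2) ℝ) (l : ℝ) :
    (Matrix.charpoly A).eval l = (l - A 0 0) * (l - A 1 1) - A 0 1 * A 1 0 := by
  rw [Matrix.charpoly, Matrix.det_fin_two]
  have h01 : Matrix.charmatrix A 0 1 = -Polynomial.C (A 0 1) :=
    Matrix.charmatrix_apply_ne _ _ _ (by decide)
  have h10 : Matrix.charmatrix A 1 0 = -Polynomial.C (A 1 0) :=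
    Matrix.charmatrix_apply_ne _ _ _ (by decide)
  rw [Matrix.charmatrix_apply_eq, Matrix.charmatrix_apply_eq, h01, h10]
  simp

/-- Corollary 5: when the unknown system has no small coefficients
(`G(s) = G'(s) = 0`), the forcing term of the l₀-LMS MSD recursion is a constant
vector `b`, so the solution's first component is `c₁λ₁ⁿ + c₂λ₂ⁿ + d` with
`d` the first component of `(I − A)⁻¹b`, and both eigenvalues satisfy
`λ₁, λ₂ < 1 − μP_xΔ_L`, the LMS decay factor. -/
theorem l0LMS_no_small_coefficients_convergence
    (L Q μ Px α κ ω : ℝ)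
    (hμ : 0 < μ) (hPx : 0 < Px) (hα : 0 < α) (hκ : 0 < κ) (hω : 0 < ω)
    (hQ0 : 0 ≤ Q) (hQL : Q < L)
    (hstab : (L + 2) * μ * Px < 2)
    (Δ0 ΔL : ℝ)
    (hΔ0 : Δ0 = 1 - μ * Px)
    (hΔL : ΔL = 2 - (L + 2) * μ * Px)
    (A : Matrix (Fin 2) (Fin 2) ℝ)
    (hA : A = Matrix.of
      ![![1 - μ * Px * ΔL, -(Real.sqrt (8 / Real.pi) * (α * κ / ω) * Δ0)],
        ![(L - Q) * μ ^ 2 * Px ^ 2,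
          1 - 2 * μ * Px * Δ0 - Real.sqrt (8 / Real.pi) * (α * κ / ω) * Δ0]])
    (l1 l2 : ℝ) (hl12 : l1 ≤ l2) (hne : l1 ≠ l2)
    (hroot1 : (Matrix.charpoly A).IsRoot l1)
    (hroot2 : (Matrix.charpoly A).IsRoot l2)
    (h1 : l1 ≠ 1) (h2 : l2 ≠ 1) :
    (∀ b : Fin 2 → ℝ, ∀ v : ℕ → Fin 2 → ℝ,
      (∀ n : ℕ, v (n + 1) = A.mulVec (v n) + b) →
      ∃ c1 c2 : ℝ, ∀ n : ℕ,
        v n 0 = c1 * l1 ^ n + c2 * l2 ^ n + ((1 - A)⁻¹.mulVec b) 0) ∧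
    l1 < 1 - μ * Px * ΔL ∧ l2 < 1 - μ * Px * ΔL := by
  -- entries
  have e00 : A 0 0 = 1 - μ * Px * ΔL := by rw [hA]; rfl
  have e01 : A 0 1 = -(Real.sqrt (8 / Real.pi) * (α * κ / ω) * Δ0) := by rw [hA]; rfl
  have e10 : A 1 0 = (L - Q) * μ ^ 2 * Px ^ 2 := by rw [hA]; rfl
  have e11 : A 1 1 = 1 - 2 * μ * Px * Δ0 - Real.sqrt (8 / Real.pi) * (α * κ / ω) * Δ0 := by
    rw [hA]; rfl
  -- roots give trace and determinant
  have hev1 : (l1 - A 0 0) * (l1 - A 1 1) - A 0 1 * A 1 0 = 0 := by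
    have := hroot1; rwa [Polynomial.IsRoot, charpoly_eval_fin_two] at this
  have hev2 : (l2 - A 0 0) * (l2 - A 1 1) - A 0 1 * A 1 0 = 0 := by
    have := hroot2; rwa [Polynomial.IsRoot, charpoly_eval_fin_two] at this
  have hsub : l1 - l2 ≠ 0 := sub_ne_zero.mpr hne
  have ht : A 0 0 + A 1 1 = l1 + l2 := by
    have h3 : (A 0 0 + A 1 1 - (l1 + l2)) * (l1 - l2) = 0 := by
      linear_combination hev2 - hev1
    rcases mul_eq_zero.mp h3 with h | h
    · linarith [sub_eq_zero.mp h]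
    · exact absurd h hsub
  have hD : A 0 0 * A 1 1 - A 0 1 * A 1 0 = l1 * l2 := by
    linear_combination hev1 + l1 * ht
  -- positivity facts
  have hμPx : 0 < μ * Px := mul_pos hμ hPx
  have hL : 0 < L := lt_of_le_of_lt hQ0 hQL
  have hΔ0pos : 0 < Δ0 := by rw [hΔ0]; nlinarith
  have hspos : 0 < Real.sqrt (8 / Real.pi) * (α * κ / ω) := by
    have : (0:ℝ) < Real.sqrt (8 / Real.pi) :=
      Real.sqrt_pos.mpr (by positivity)
    positivity
  -- eigenvalue bounds
  have hP1 : 0 < ((1 - μ * Px * ΔL) - l1) * ((1 - μ * Px * ΔL) - l2) := by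
    have : ((1 - μ * Px * ΔL) - l1) * ((1 - μ * Px * ΔL) - l2)
        = Real.sqrt (8 / Real.pi) * (α * κ / ω) * Δ0 * ((L - Q) * μ ^ 2 * Px ^ 2) := by
      rw [e00] at ht hD
      rw [e01, e10] at hD
      linear_combination (1 - μ * Px * ΔL) * ht - hD
    rw [this]
    have hLQ : 0 < L - Q := by linarith
    positivity
  have hP2 : l1 + l2 < 2 * (1 - μ * Px * ΔL) := by
    rw [← ht, e00, e11, hΔ0, hΔL]
    nlinarith [mul_pos hspos hΔ0pos, sq_nonneg (μ * Px)]
  have hub2 : l2 < 1 - μ * Px * ΔL := by nlinarith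
  have hub1 : l1 < 1 - μ * Px * ΔL := lt_of_le_of_lt hl12 hub2
  refine ⟨?_, hub1, hub2⟩
  intro b v hv
  -- invertibility of 1 - A
  have hdet : (1 - A).det = (1 - l1) * (1 - l2) := by
    rw [Matrix.det_fin_two]
    have s00 : (1 - A) 0 0 = 1 - A 0 0 := by simp [Matrix.sub_apply, Matrix.one_apply]
    have s01 : (1 - A) 0 1 = -A 0 1 := by simp [Matrix.sub_apply, Matrix.one_apply]
    have s10 : (1 - A) 1 0 = -A 1 0 := by simp [Matrix.sub_apply, Matrix.one_apply]
    have s11 : (1 - A) 1 1 = 1 - A 1 1 := by simp [Matrix.sub_apply, Matrix.one_apply]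
    rw [s00, s01, s10, s11]
    linear_combination -ht + hD
  have hdet0 : (1 - A).det ≠ 0 := by
    rw [hdet]
    exact mul_ne_zero (sub_ne_zero.mpr (Ne.symm h1)) (sub_ne_zero.mpr (Ne.symm h2))
  set x : Fin 2 → ℝ := (1 - A)⁻¹.mulVec b with hx
  have hfix : A.mulVec x + b = x := by
    have hmul : (1 - A) * (1 - A)⁻¹ = 1 :=
      Matrix.mul_nonsing_inv _ (isUnit_iff_ne_zero.mpr hdet0)
    have h1x : (1 - A).mulVec x = b := by
      rw [hx, Matrix.mulVec_mulVec, hmul, Matrix.one_mulVec]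
    have h2x : (1 - A).mulVec x = x - A.mulVec x := by
      rw [Matrix.sub_mulVec, Matrix.one_mulVec]
    rw [h2x] at h1x
    funext i
    have := congrFun h1x i
    simp [Pi.add_apply, Pi.sub_apply] at this ⊢
    linarith
  -- component form of mulVec
  have hmv : ∀ w : Fin 2 → ℝ, ∀ i : Fin 2,
      (A.mulVec w) i = A i 0 * w 0 + A i 1 * w 1 := by
    intro w i
    simp [Matrix.mulVec, dotProduct, Fin.sum_univ_two]
  -- shifted sequences
  set p : ℕ → ℝ := fun n => v n 0 - x 0 with hpdef
  set q : ℕ → ℝ := fun n => v n 1 - x 1 with hqdef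
  have hp : ∀ n, p (n + 1) = A 0 0 * p n + A 0 1 * q n := by
    intro n
    have h1n := congrFun (hv n) 0
    have h2n := congrFun hfix 0
    simp only [Pi.add_apply] at h1n h2n
    rw [hmv] at h1n h2n
    simp only [hpdef, hqdef]
    linear_combination h1n + h2n
  have hq : ∀ n, q (n + 1) = A 1 0 * p n + A 1 1 * q n := by
    intro n
    have h1n := congrFun (hv n) 1
    have h2n := congrFun hfix 1
    simp only [Pi.add_apply] at h1n h2n
    rw [hmv] at h1n h2n
    simp only [hpdef, hqdef]
    linear_combination h1n + h2n
  obtain ⟨c1, c2, hc⟩ := rec_solve (A 0 0) (A 0 1) (A 1 0) (A 1 1) l1 l2 hne ht hD p q hp hq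
  refine ⟨c1, c2, fun n => ?_⟩
  have := hc n
  simp only [hpdef] at this
  linarith
end
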